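/- Let 1 ≤ i < j ≤ m−1, let n ≥ 2, and suppose m ≥ 2j. Then α_j ≱_PS α_i; that is, there exists a profile of n preferences over m candidates at which the i-approval rule α_i is manipulable but the j-approval rule α_j is not manipulable. -/

import Mathlib

/-- A preference order on `m` candidates: `σ c` is the position of candidate `c`
(position `0` is the most preferred). `σ c < σ d` means `c` is strictly preferred to `d`. -/
abbrev Pref (m : ℕ) := Fin m ≃ Fin m

/-- A voting rule for `n` voters and `m` candidates. -/
abbrev Rule (m n : ℕ) := (Fin n → Pref m) → Fin m

/-- Total score of candidate `c` under score vector `s` (indexed by position) at profile `P`. -/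
def score {m n : ℕ} (s : Fin m → ℕ) (P : Fin n → Pref m) (c : Fin m) : ℕ :=
  ∑ v, s (P v c)

/-- The scoring rule with score vector `s`: the winner is the candidate that is first in the
lexicographic tie-breaking order (i.e. has the least index) among those of maximal score. -/
def winner {m n : ℕ} [NeZero m] (s : Fin m → ℕ) (P : Fin n → Pref m) : Fin m :=
  (Finset.univ.filter fun c => ∀ d, score s P d ≤ score s P c).min' (by
    obtain ⟨c, -, hc⟩ := Finset.exists_max_image Finset.univ (score s P) Finset.univ_nonempty
    exact ⟨c, Finset.mem_filter.mpr ⟨Finset.mem_univ c, fun d => hc d (Finset.mem_univ d)⟩⟩)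

/-- `k`-approval, `α_k`: one point for each of the top `k` positions. -/
def approval (m n k : ℕ) [NeZero m] : Rule m n :=
  winner (fun r => if (r : ℕ) < k then 1 else 0)

/-- `k`-Borda, `β_k`: `max (0, k - r + 1)` points for (`1`-indexed) position `r`, i.e. `k - r`
(truncated subtraction) points for `0`-indexed position `r`. -/
def kBorda (m n k : ℕ) [NeZero m] : Rule m n :=
  winner (fun r => k - (r : ℕ))

/-- `f` is manipulable at profile `P`: some voter `v` can misreport some preference `Q` and
obtain an outcome strictly preferred (by `v`'s true preferences) to the sincere outcome. -/
def Manipulable {m n : ℕ} (f : Rule m n) (P : Fin n → Pref m) : Prop :=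
  ∃ (v : Fin n) (Q : Pref m), P v (f (Function.update P v Q)) < P v (f P)

/-- `f ≥_PS g` : every profile at which `g` is manipulable is one at which `f` is manipulable. -/
def MoreManip {m n : ℕ} (f g : Rule m n) : Prop :=
  ∀ P : Fin n → Pref m, Manipulable g P → Manipulable f P

/-!
Candidate `0` is placed among the top `j` of every voter, so under `α_j` it wins with all `n`
approvals. A voter who prefers some `d` to `0` cannot make `d` win: another voter does not
approve `d` under `α_j`, so `d` gets at most `n - 1` approvals, while `0` keeps at least `n - 1`
and wins ties.

Under `α_i` candidate `1` beats `0` by exactly one point and no candidate beats `1`. Voter `0`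
ranks `0` outside their top `i` but above `1`; moving `0` to the top gives it the point it
needs to win the tie. The scores of `0` and `1` are balanced by blocks of voters: for `i ≥ 2` a
single voter approves `1` but not `0`, while for `i = 1` voters ranking `1` first are paired
with voters ranking `0` first, and for odd `n` one voter ranking `2` first takes up the parity.
-/

open Finset

variable {m n : ℕ}

abbrev approvalVector (m k : ℕ) : Fin m → ℕ := fun r => if (r : ℕ) < k then 1 else 0

section Winner

variable [NeZero m] (s : Fin m → ℕ) (P : Fin n → Pref m)

lemma score_le_score_winner (d : Fin m) : score s P d ≤ score s P (winner s P) :=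
  (mem_filter.1 (min'_mem (univ.filter fun c => ∀ d, score s P d ≤ score s P c) _)).2 d

lemma winner_le_of_score_le {c : Fin m} (h : score s P (winner s P) ≤ score s P c) :
    winner s P ≤ c :=
  min'_le _ _ (mem_filter.2 ⟨mem_univ c, fun d => (score_le_score_winner s P d).trans h⟩)

lemma winner_eq_of {c : Fin m} (hmax : ∀ d, score s P d ≤ score s P c)
    (hlt : ∀ d < c, score s P d < score s P c) : winner s P = c :=
  (winner_le_of_score_le s P (hmax _)).antisymm
    (not_lt.1 fun h => (hlt _ h).not_ge (score_le_score_winner s P c))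

lemma winner_eq_zero_of (hmax : ∀ d, score s P d ≤ score s P 0) : winner s P = 0 :=
  winner_eq_of s P hmax fun d hd => absurd hd (Fin.not_lt_zero d)

end Winner

lemma score_update_add (s : Fin m → ℕ) (P : Fin n → Pref m) (v : Fin n) (Q : Pref m)
    (c : Fin m) : score s (Function.update P v Q) c + s (P v c) = score s P c + s (Q c) := by
  simp only [score, ← add_sum_erase _ _ (mem_univ v), Function.update_self]
  rw [sum_congr rfl fun u hu => by rw [Function.update_of_ne (ne_of_mem_erase hu)]]
  ring

section Approval

variable {k : ℕ} {P : Fin n → Pref m} {c : Fin m}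

lemma score_approvalVector : score (approvalVector m k) P c = #{v | (P v c : ℕ) < k} := by
  simp [score, sum_boole]

lemma score_approvalVector_le_sub_one {w : Fin n} (hw : k ≤ (P w c : ℕ)) :
    score (approvalVector m k) P c ≤ n - 1 := by
  rw [score_approvalVector]
  calc #{v | (P v c : ℕ) < k} ≤ #(univ.erase w) :=
        card_le_card fun v hv =>
          mem_erase.2 ⟨by rintro rfl; exact (mem_filter.1 hv).2.not_ge hw, mem_univ v⟩
    _ = n - 1 := by simp

lemma sub_one_le_score_approvalVector {v : Fin n} (h : ∀ u ≠ v, (P u c : ℕ) < k) :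
    n - 1 ≤ score (approvalVector m k) P c := by
  rw [score_approvalVector]
  calc n - 1 = #(univ.erase v) := by simp
    _ ≤ #{u | (P u c : ℕ) < k} :=
        card_le_card fun u hu => by simpa using h u (ne_of_mem_erase hu)

variable [NeZero m]

theorem not_manipulable_approval (P : Fin n → Pref m) (happroved : ∀ v, (P v 0 : ℕ) < k)
    (hdissent : ∀ v d, P v d < P v 0 → ∃ w ≠ v, k ≤ (P w d : ℕ)) :
    ¬ Manipulable (approval m n k) P := by
  have hP : approval m n k P = 0 := winner_eq_zero_of _ _ fun d => by
    rw [score_approvalVector, score_approvalVector, filter_true_of_mem fun v _ => happroved v]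
    exact card_le_card (filter_subset _ _)
  rintro ⟨v, Q, hQ⟩
  rw [hP] at hQ
  obtain ⟨w, hwv, hw⟩ := hdissent v _ hQ
  have hother : ∀ u ≠ v, Function.update P v Q u = P u :=
    fun u hu => Function.update_of_ne hu _ _
  set P' := Function.update P v Q
  have hle :
      score (approvalVector m k) P' (approval m n k P') ≤ score (approvalVector m k) P' 0 :=
    (score_approvalVector_le_sub_one (w := w) (by rwa [hother w hwv])).trans
      (sub_one_le_score_approvalVector fun u hu => by rw [hother u hu]; exact happroved u)
  have hP' : approval m n k P' = 0 := nonpos_iff_eq_zero.1 (winner_le_of_score_le _ _ hle)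
  exact lt_irrefl _ (hP' ▸ hQ)

theorem manipulable_approval_of_promote (hk : 0 < k) (P : Fin n → Pref m) (v : Fin n)
    (hv : k ≤ (P v 0 : ℕ))
    (hlead : ∀ d, score (approvalVector m k) P d ≤ score (approvalVector m k) P 0 + 1)
    (hwin : P v 0 < P v (approval m n k P)) :
    Manipulable (approval m n k) P := by
  set Q : Pref m := (P v).trans (Equiv.swap (P v 0) 0)
  have hQ0 : approvalVector m k (Q 0) = 1 := by simp [Q, hk]
  have hPv0 : approvalVector m k (P v 0) = 0 := by simp [hv]
  have hQd (d : Fin m) (hd : d ≠ 0) :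
      approvalVector m k (Q d) ≤ approvalVector m k (P v d) := by
    simp only [Q, Equiv.trans_apply, Equiv.swap_apply_def, if_neg ((P v).injective.ne hd)]
    split_ifs <;> simp [hPv0]
  have hQwin : approval m n k (Function.update P v Q) = 0 := by
    refine winner_eq_zero_of (approvalVector m k) _ fun d => ?_
    rcases eq_or_ne d 0 with rfl | hd
    · exact le_rfl
    have h0 := score_update_add (approvalVector m k) P v Q 0
    have hd' := score_update_add (approvalVector m k) P v Q d
    have := hQd d hd
    have := hlead d
    omega
  exact ⟨v, Q, hQwin ▸ hwin⟩

end Approval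

section BlockProfile

variable (V R I D : Pref m) (r b e : ℕ)

def blockProfile : Fin (r + b + e + 1 + 1) → Pref m :=
  Fin.cons V <| Fin.cons R <|
    Fin.append (Fin.append (fun _ : Fin r => R) fun _ : Fin b => I) fun _ : Fin e => D

lemma score_blockProfile (s : Fin m → ℕ) (c : Fin m) :
    score s (blockProfile V R I D r b e) c
      = s (V c) + (r + 1) * s (R c) + b * s (I c) + e * s (D c) := by
  simp only [score, blockProfile, Fin.sum_univ_succ, Fin.cons_zero, Fin.cons_succ,
    Fin.sum_univ_add, Fin.append_left, Fin.append_right, sum_const, card_univ, Fintype.card_fin,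
    smul_eq_mul]
  ring

lemma forall_blockProfile {p : Pref m → Prop} (hV : p V) (hR : p R) (hI : p I) (hD : p D) :
    ∀ v, p (blockProfile V R I D r b e v) := by
  refine Fin.cases hV (Fin.cases hR (Fin.addCases (Fin.addCases ?_ ?_) ?_)) <;>
    simp [blockProfile, hR, hI, hD]

end BlockProfile

noncomputable def Pref.ofPositions (f : ℕ → ℕ) (hmaps : ∀ c < m, f c < m)
    (hinj : ∀ c < m, ∀ d < m, f c = f d → c = d) : Pref m :=
  Equiv.ofBijective (fun c => ⟨f c, hmaps c c.2⟩)
    (Finite.injective_iff_bijective.1 fun c d h => Fin.ext (hinj c c.2 d d.2 (congrArg Fin.val h)))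

@[simp] lemma Pref.ofPositions_apply (f : ℕ → ℕ) (hmaps) (hinj) (c : Fin m) :
    (Pref.ofPositions f hmaps hinj c : ℕ) = f c := rfl

-- the ranking `j+1, …, 2j-1, 0, 1, …, j, 2j, …`
def manipulatorPos (j c : ℕ) : ℕ :=
  if c = 0 then j - 1 else if c ≤ j then c + j - 1 else if c < 2 * j then c - j - 1 else c

-- the ranking `1, …, t, 0, t+1, …`
def zeroAtPos (t c : ℕ) : ℕ := if c = 0 then t else if c ≤ t then c - 1 else c

-- the ranking `2, 0, 1, 3, …`
def twoFirstPos (c : ℕ) : ℕ := if c = 2 then 0 else if c < 2 then c + 1 else c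

noncomputable def manipulatorPref (j : ℕ) (hj : 2 * j ≤ m) : Pref m :=
  Pref.ofPositions (manipulatorPos j)
    (fun c hc => by grind [manipulatorPos]) (fun c hc d hd h => by grind [manipulatorPos])

noncomputable def zeroAtPref (t : ℕ) (ht : t < m) : Pref m :=
  Pref.ofPositions (zeroAtPos t)
    (fun c hc => by grind [zeroAtPos]) (fun c hc d hd h => by grind [zeroAtPos])

noncomputable def twoFirstPref (hm : 3 ≤ m) : Pref m :=
  Pref.ofPositions twoFirstPos
    (fun c hc => by grind [twoFirstPos]) (fun c hc d hd h => by grind [twoFirstPos])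

def approvalTally (i j r b e c : ℕ) : ℕ :=
  (if manipulatorPos j c < i then 1 else 0) + (r + 1) * (if zeroAtPos i c < i then 1 else 0)
    + b * (if c < i then 1 else 0) + e * (if twoFirstPos c < i then 1 else 0)

section Tally

variable {i j r b e : ℕ}
  (hblocks : (i = 1 ∧ r = b ∧ e ≤ 1) ∨ (2 ≤ i ∧ r = 0 ∧ e = 0))
include hblocks

lemma approvalTally_one (hij : i < j) :
    approvalTally i j r b e 1 = approvalTally i j r b e 0 + 1 := by
  grind [approvalTally, manipulatorPos, zeroAtPos, twoFirstPos]

lemma approvalTally_le_one (c : ℕ) : approvalTally i j r b e c ≤ approvalTally i j r b e 1 := by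
  grind [approvalTally, manipulatorPos, zeroAtPos, twoFirstPos]

end Tally

section SeparatingProfile

variable {i j : ℕ} (hi : 1 ≤ i) (hij : i < j) (hm : 2 * j ≤ m)
include hi hij hm

noncomputable def separatingProfile (r b e : ℕ) : Fin (r + b + e + 1 + 1) → Pref m :=
  blockProfile (manipulatorPref j hm) (zeroAtPref i (by omega)) (Equiv.refl _)
    (twoFirstPref (by omega)) r b e

lemma score_separatingProfile (r b e : ℕ) (c : Fin m) :
    score (approvalVector m i) (separatingProfile hi hij hm r b e) c
      = approvalTally i j r b e c := by
  rw [separatingProfile, score_blockProfile]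
  rfl

variable [NeZero m]

theorem manipulable_separatingProfile {r b e : ℕ}
    (hblocks : (i = 1 ∧ r = b ∧ e ≤ 1) ∨ (2 ≤ i ∧ r = 0 ∧ e = 0)) :
    Manipulable (approval m _ i) (separatingProfile hi hij hm r b e) := by
  have hS := score_separatingProfile hi hij hm r b e
  have h1 : score (approvalVector m i) (separatingProfile hi hij hm r b e) ⟨1, by omega⟩
      = score (approvalVector m i) (separatingProfile hi hij hm r b e) 0 + 1 := by
    rw [hS, hS, Fin.val_zero]
    exact approvalTally_one hblocks hij
  have hmax (d : Fin m) : score (approvalVector m i) (separatingProfile hi hij hm r b e) d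
      ≤ score (approvalVector m i) (separatingProfile hi hij hm r b e) ⟨1, by omega⟩ := by
    rw [hS, hS]
    exact approvalTally_le_one hblocks d
  have hwin : approval m _ i (separatingProfile hi hij hm r b e) = ⟨1, by omega⟩ :=
    winner_eq_of _ _ hmax fun d hd => by
      rw [show d = 0 from Fin.ext (Nat.lt_one_iff.1 hd), h1]
      exact Nat.lt_succ_self _
  refine manipulable_approval_of_promote (by omega) _ 0 ?_ (fun d => h1 ▸ hmax d) ?_
  · show i ≤ manipulatorPos j 0
    grind [manipulatorPos]
  · rw [hwin, Fin.lt_def]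
    show manipulatorPos j 0 < manipulatorPos j 1
    grind [manipulatorPos]

theorem not_manipulable_separatingProfile (r b e : ℕ) :
    ¬ Manipulable (approval m _ j) (separatingProfile hi hij hm r b e) := by
  set P := separatingProfile hi hij hm r b e
  have happroved : ∀ v, (P v 0 : ℕ) < j := by
    refine forall_blockProfile _ _ _ _ _ _ _ (p := fun T => (T 0 : ℕ) < j) ?_ ?_ ?_ ?_ <;>
      simp only [manipulatorPref, zeroAtPref, twoFirstPref, Pref.ofPositions_apply,
        Equiv.refl_apply, Fin.val_zero] <;>
      grind [manipulatorPos, zeroAtPos, twoFirstPos]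
  -- `manipulatorPos j` and `zeroAtPos i` are the ballots of voters `0` and `1`
  have hdissent : ∀ v d, P v d < P v 0 → j ≤ manipulatorPos j d ∨ j ≤ zeroAtPos i d := by
    refine forall_blockProfile _ _ _ _ _ _ _
      (p := fun T => ∀ d, T d < T 0 → j ≤ manipulatorPos j d ∨ j ≤ zeroAtPos i d)
      ?_ ?_ ?_ ?_ <;>
      intro d hd <;> rw [Fin.lt_def] at hd <;>
      simp only [manipulatorPref, zeroAtPref, twoFirstPref, Pref.ofPositions_apply,
        Equiv.refl_apply, Fin.val_zero] at hd <;>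
      grind [manipulatorPos, zeroAtPos, twoFirstPos]
  refine not_manipulable_approval _ happroved fun v d hd => ?_
  have hlt := (Fin.lt_def.1 hd).trans (happroved v)
  rcases hdissent v d hd with h | h
  · exact ⟨0, by rintro rfl; exact absurd hlt (not_lt.2 h), h⟩
  · exact ⟨Fin.succ 0, by rintro rfl; exact absurd hlt (not_lt.2 h), h⟩

end SeparatingProfile

theorem stmt_4_general (m n i j : ℕ) [NeZero m] (hi : 1 ≤ i) (hij : i < j)
    (hn : 2 ≤ n) (hm : 2 * j ≤ m) :
    ∃ P : Fin n → Pref m,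
      Manipulable (approval m n i) P ∧ ¬ Manipulable (approval m n j) P := by
  obtain ⟨r, b, e, rfl, hblocks⟩ : ∃ r b e, n = r + b + e + 1 + 1 ∧
      ((i = 1 ∧ r = b ∧ e ≤ 1) ∨ (2 ≤ i ∧ r = 0 ∧ e = 0)) := by
    rcases hi.eq_or_lt with rfl | hi2
    · exact ⟨(n - 2) / 2, (n - 2) / 2, (n - 2) % 2, by omega, .inl ⟨rfl, rfl, by omega⟩⟩
    · exact ⟨0, n - 2, 0, by omega, .inr ⟨hi2, rfl, rfl⟩⟩
  exact ⟨separatingProfile hi hij hm r b e, manipulable_separatingProfile hi hij hm hblocks,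
    not_manipulable_separatingProfile hi hij hm r b e⟩

/-- For `1 ≤ i < j ≤ m-1`, `n ≥ 2`, and `m ≥ 2j`: `α_j ≱_PS α_i`. -/
theorem stmt_4 (m n i j : ℕ) [NeZero m] (hi : 1 ≤ i) (hij : i < j) (hj : j ≤ m - 1)
    (hn : 2 ≤ n) (hm : 2 * j ≤ m) :
    ∃ P : Fin n → Pref m,
      Manipulable (approval m n i) P ∧ ¬ Manipulable (approval m n j) P :=
  stmt_4_general m n i j hi hij hn hm
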